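/- Let Ω ⊆ ℝ³ be an open set and ω ∈ ℂ with ω ≠ 0. Let ε, μ : Ω → ℂ^{3×3} be of class C¹, E, H : Ω → ℂ³ of class C¹, J_m : Ω → ℂ³ of class C¹ and J_e : Ω → ℂ³ continuous, and assume the time-harmonic Maxwell system holds pointwise on Ω: curl H = iωεE + J_e and curl E = −iωμH + J_m. Then for every k ∈ {1,2,3} and every compactly supported test function φ ∈ C²_c(Ω;ℂ) there holds the very weak identity ∫_Ω H_k div(μᵀ ∇φ̄) dx = ∫_Ω ((∂_k μ)H − μ(e_k × (J_e + iωεE)) + (i/ω) e_k div J_m) · ∇φ̄ dx, where φ̄ denotes the complex conjugate of φ, dx is Lebesgue measure on ℝ³ and a·b = Σ_j a_j b_j (no conjugation). -/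

import Mathlib

open Matrix MeasureTheory

noncomputable section

/-- Partial derivative of a scalar function in the j-th coordinate direction. -/
def pd3 (j : Fin 3) (f : (Fin 3 → ℝ) → ℂ) (x : Fin 3 → ℝ) : ℂ :=
  fderiv ℝ f x (Pi.single j 1)

/-- Divergence of a vector field. -/
def vdiv (F : (Fin 3 → ℝ) → Fin 3 → ℂ) (x : Fin 3 → ℝ) : ℂ :=
  ∑ j : Fin 3, pd3 j (fun y => F y j) x

/-- Curl of a vector field. -/
def vcurl (F : (Fin 3 → ℝ) → Fin 3 → ℂ) (x : Fin 3 → ℝ) : Fin 3 → ℂ :=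
  ![pd3 1 (fun y => F y 2) x - pd3 2 (fun y => F y 1) x,
    pd3 2 (fun y => F y 0) x - pd3 0 (fun y => F y 2) x,
    pd3 0 (fun y => F y 1) x - pd3 1 (fun y => F y 0) x]

/-- Gradient of a scalar function. -/
def grad3 (u : (Fin 3 → ℝ) → ℂ) (x : Fin 3 → ℝ) : Fin 3 → ℂ := fun j => pd3 j u x

/-- Cross product on ℂ³. -/
def cross3 (a b : Fin 3 → ℂ) : Fin 3 → ℂ :=
  ![a 1 * b 2 - a 2 * b 1, a 2 * b 0 - a 0 * b 2, a 0 * b 1 - a 1 * b 0]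

/-- The k-th standard basis vector of ℝ³ viewed in ℂ³. -/
def e3 (k : Fin 3) : Fin 3 → ℂ := Pi.single k 1

/-- Entrywise partial derivative of a matrix field in the k-th direction. -/
def mpd3 (k : Fin 3) (a : (Fin 3 → ℝ) → Matrix (Fin 3) (Fin 3) ℂ) (x : Fin 3 → ℝ) :
    Matrix (Fin 3) (Fin 3) ℂ :=
  Matrix.of fun i j => pd3 k (fun y => a y i j) x

/-!
Integrating by parts once moves the derivative from `μᵀ ∇φ̄` onto `H_k`. The pointwise identity
`∇H_k = e_k × curl H + ∂_k H` and the product rule `μ ∂_k H = ∂_k (μH) - (∂_k μ) H` leave the term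
`∫ ∂_k (μH) · ∇φ̄`, which two more integrations by parts and the symmetry of second derivatives
turn into `∫ div (μH) ∂_k φ̄`. Taking the divergence of `curl E = -iωμH + J_m` gives
`div (μH) = -(i/ω) div J_m`; as `E` is only `C¹`, this is obtained weakly (`div curl E` integrates
to zero against test functions) and then holds almost everywhere. The fields are only `C¹` on `Ω`,
which suffices since every integrand carries a factor supported in the compact set `supp φ ⊆ Ω`.
-/

local notation "ℝ³" => Fin 3 → ℝ

theorem ContDiffOn.contDiff_of_tsupport_subset {E F : Type*} [NormedAddCommGroup E]
    [NormedSpace ℝ E] [NormedAddCommGroup F] [NormedSpace ℝ F] {n : WithTop ℕ∞} {U : Set E}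
    {f : E → F} (hU : IsOpen U) (hf : ContDiffOn ℝ n f U) (hfU : tsupport f ⊆ U) :
    ContDiff ℝ n f := by
  refine contDiff_iff_contDiffAt.2 fun x => ?_
  by_cases hx : x ∈ U
  · exact hf.contDiffAt (hU.mem_nhds hx)
  · exact contDiffAt_const.congr_of_eventuallyEq
      (notMem_tsupport_iff_eventuallyEq.1 fun h => hx (hfU h))

theorem ContinuousOn.integrable_mul_of_tsupport_subset {X 𝕜 : Type*} [TopologicalSpace X]
    [MeasurableSpace X] [OpensMeasurableSpace X] {μ : Measure X} [IsFiniteMeasureOnCompacts μ]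
    [NormedRing 𝕜] {U : Set X} {f g : X → 𝕜} (hf : ContinuousOn f U) (hg : Continuous g)
    (hgs : HasCompactSupport g) (hgU : tsupport g ⊆ U) :
    Integrable (fun x => f x * g x) μ :=
  (integrableOn_iff_integrable_of_support_subset
      ((Function.support_mul_subset_right f g).trans (subset_tsupport g))).1 <|
    ((hf.mono hgU).mul hg.continuousOn).integrableOn_compact' hgs
      (isClosed_tsupport g).measurableSet

section PartialDerivatives

variable {f g : ℝ³ → ℂ} {x : ℝ³} {U : Set ℝ³}

theorem pd3_eq_zero_of_notMem_tsupport (hx : x ∉ tsupport f) (j : Fin 3) : pd3 j f x = 0 := by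
  simp [pd3, fderiv_of_notMem_tsupport ℝ hx]

theorem tsupport_pd3_subset (j : Fin 3) : tsupport (pd3 j f) ⊆ tsupport f :=
  tsupport_fderiv_apply_subset ℝ _

theorem HasCompactSupport.pd3 (hf : HasCompactSupport f) (j : Fin 3) :
    HasCompactSupport (pd3 j f) :=
  hf.fderiv_apply ℝ _

theorem ContDiffOn.continuousOn_pd3 (hU : IsOpen U) (hf : ContDiffOn ℝ 1 f U) (j : Fin 3) :
    ContinuousOn (pd3 j f) U :=
  (hf.continuousOn_fderiv_of_isOpen hU le_rfl).clm_apply continuousOn_const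

theorem ContDiff.contDiff_pd3 {m n : WithTop ℕ∞} (hf : ContDiff ℝ n f) (hmn : m + 1 ≤ n)
    (j : Fin 3) : ContDiff ℝ m (pd3 j f) :=
  (hf.fderiv_right hmn).clm_apply contDiff_const

theorem ContDiff.continuous_pd3 (hf : ContDiff ℝ 1 f) (j : Fin 3) : Continuous (pd3 j f) :=
  (hf.continuous_fderiv one_ne_zero).clm_apply continuous_const

theorem pd3_add (hf : DifferentiableAt ℝ f x) (hg : DifferentiableAt ℝ g x) (j : Fin 3) :
    pd3 j (fun y => f y + g y) x = pd3 j f x + pd3 j g x := by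
  simp [pd3, fderiv_fun_add hf hg]

theorem pd3_const_mul (hf : DifferentiableAt ℝ f x) (c : ℂ) (j : Fin 3) :
    pd3 j (fun y => c * f y) x = c * pd3 j f x := by
  simp [pd3, fderiv_const_mul hf]

theorem pd3_mul (hf : DifferentiableAt ℝ f x) (hg : DifferentiableAt ℝ g x) (j : Fin 3) :
    pd3 j (fun y => f y * g y) x = pd3 j f x * g x + f x * pd3 j g x := by
  simp [pd3, fderiv_fun_mul hf hg]
  ring

theorem pd3_sum {ι : Type*} {s : Finset ι} {F : ι → ℝ³ → ℂ}
    (hF : ∀ i ∈ s, DifferentiableAt ℝ (F i) x) (j : Fin 3) :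
    pd3 j (fun y => ∑ i ∈ s, F i y) x = ∑ i ∈ s, pd3 j (F i) x := by
  simp [pd3, fderiv_fun_sum hF]

theorem pd3_pd3_comm (hf : ContDiff ℝ 2 f) (i k : Fin 3) :
    pd3 i (pd3 k f) x = pd3 k (pd3 i f) x := by
  have hd : DifferentiableAt ℝ (fderiv ℝ f) x :=
    ((hf.fderiv_right (m := 1) le_rfl).differentiable one_ne_zero).differentiableAt
  have h2 : ∀ a b : Fin 3,
      pd3 a (pd3 b f) x = fderiv ℝ (fderiv ℝ f) x (Pi.single a 1) (Pi.single b 1) := by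
    intro a b
    unfold pd3
    rw [fderiv_clm_apply hd (differentiableAt_const _)]
    simp
  rw [h2, h2, (hf.contDiffAt.isSymmSndFDerivAt (by simp)).eq]

end PartialDerivatives

def vpd3 (k : Fin 3) (F : ℝ³ → Fin 3 → ℂ) (x : ℝ³) : Fin 3 → ℂ :=
  fun i => pd3 k (fun y => F y i) x

section VectorCalculus

variable {U : Set ℝ³} {x : ℝ³}

theorem grad3_eq_zero_of_notMem_tsupport {u : ℝ³ → ℂ} (hx : x ∉ tsupport u) : grad3 u x = 0 :=
  funext (pd3_eq_zero_of_notMem_tsupport hx)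

theorem cross3_e3_vcurl_apply (F : ℝ³ → Fin 3 → ℂ) (k j : Fin 3) :
    cross3 (e3 k) (vcurl F x) j = pd3 j (fun y => F y k) x - pd3 k (fun y => F y j) x := by
  fin_cases k <;> fin_cases j <;> simp [cross3, e3, vcurl]

theorem grad3_apply_eq_cross3_vcurl_add_vpd3 (F : ℝ³ → Fin 3 → ℂ) (k : Fin 3) :
    grad3 (fun y => F y k) x = cross3 (e3 k) (vcurl F x) + vpd3 k F x := by
  funext j
  simp [cross3_e3_vcurl_apply, grad3, vpd3]

theorem smul_e3_dotProduct (c : ℂ) (k : Fin 3) (v : Fin 3 → ℂ) : (c • e3 k) ⬝ᵥ v = c * v k := by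
  simp [e3, dotProduct, Pi.single_apply]

theorem contDiffOn_mulVec_apply {n : WithTop ℕ∞} {A : ℝ³ → Matrix (Fin 3) (Fin 3) ℂ}
    {v : ℝ³ → Fin 3 → ℂ} (hA : ∀ i j, ContDiffOn ℝ n (fun x => A x i j) U)
    (hv : ∀ j, ContDiffOn ℝ n (fun x => v x j) U) (i : Fin 3) :
    ContDiffOn ℝ n (fun x => (A x *ᵥ v x) i) U :=
  ContDiffOn.sum (s := Finset.univ) fun j _ => (hA i j).mul (hv j)

theorem continuousOn_mulVec_apply {A : ℝ³ → Matrix (Fin 3) (Fin 3) ℂ} {v : ℝ³ → Fin 3 → ℂ}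
    (hA : ∀ i j, ContinuousOn (fun x => A x i j) U) (hv : ∀ j, ContinuousOn (fun x => v x j) U)
    (i : Fin 3) : ContinuousOn (fun x => (A x *ᵥ v x) i) U :=
  continuousOn_finsetSum (f := fun j x => A x i j * v x j) Finset.univ fun j _ =>
    (hA i j).mul (hv j)

theorem vpd3_mulVec {A : ℝ³ → Matrix (Fin 3) (Fin 3) ℂ} {v : ℝ³ → Fin 3 → ℂ}
    (hA : ∀ i j, DifferentiableAt ℝ (fun y => A y i j) x)
    (hv : ∀ j, DifferentiableAt ℝ (fun y => v y j) x) (k : Fin 3) :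
    vpd3 k (fun y => A y *ᵥ v y) x = mpd3 k A x *ᵥ v x + A x *ᵥ vpd3 k v x := by
  funext i
  simp only [vpd3, mulVec, dotProduct, Pi.add_apply, mpd3, of_apply]
  rw [pd3_sum (F := fun j y => A y i j * v y j) fun j _ => (hA i j).mul (hv j),
    ← Finset.sum_add_distrib]
  exact Finset.sum_congr rfl fun j _ => pd3_mul (hA i j) (hv j) k

theorem vdiv_smul_add {F G : ℝ³ → Fin 3 → ℂ} (hF : ∀ i, DifferentiableAt ℝ (fun y => F y i) x)
    (hG : ∀ i, DifferentiableAt ℝ (fun y => G y i) x) (c : ℂ) :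
    vdiv (fun y => c • F y + G y) x = c * vdiv F x + vdiv G x := by
  simp only [vdiv, Pi.add_apply, Pi.smul_apply, smul_eq_mul, Finset.mul_sum,
    ← Finset.sum_add_distrib]
  refine Finset.sum_congr rfl fun i _ => ?_
  rw [pd3_add ((hF i).const_mul c) (hG i), pd3_const_mul (hF i)]

theorem continuousOn_vdiv {F : ℝ³ → Fin 3 → ℂ} (hU : IsOpen U)
    (hF : ∀ i, ContDiffOn ℝ 1 (fun x => F x i) U) : ContinuousOn (vdiv F) U :=
  continuousOn_finsetSum _ fun i _ => (hF i).continuousOn_pd3 hU i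

theorem tsupport_mulVec_grad3_subset (A : ℝ³ → Matrix (Fin 3) (Fin 3) ℂ) (ψ : ℝ³ → ℂ)
    (i : Fin 3) : tsupport (fun y => (A y *ᵥ grad3 ψ y) i) ⊆ tsupport ψ :=
  closure_minimal (fun y hy => by_contra fun hψ => hy (by
    simp [grad3_eq_zero_of_notMem_tsupport hψ])) (isClosed_tsupport ψ)

theorem vdiv_mulVec_grad3_eq_zero_of_notMem_tsupport (A : ℝ³ → Matrix (Fin 3) (Fin 3) ℂ)
    {ψ : ℝ³ → ℂ} (hx : x ∉ tsupport ψ) : vdiv (fun y => A y *ᵥ grad3 ψ y) x = 0 :=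
  Finset.sum_eq_zero fun i _ =>
    pd3_eq_zero_of_notMem_tsupport (fun h => hx (tsupport_mulVec_grad3_subset A ψ i h)) i

end VectorCalculus

section IntegrationByParts

variable {U : Set ℝ³} {f g ψ : ℝ³ → ℂ}

theorem integral_mul_pd3_eq_neg (hU : IsOpen U) (hf : ContDiffOn ℝ 1 f U) (hg : ContDiff ℝ 1 g)
    (hgs : HasCompactSupport g) (hgU : tsupport g ⊆ U) (j : Fin 3) :
    ∫ x, f x * pd3 j g x = -∫ x, pd3 j f x * g x :=
  integral_mul_fderiv_eq_neg_fderiv_mul_of_integrable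
    ((hf.continuousOn_pd3 hU j).integrable_mul_of_tsupport_subset hg.continuous hgs hgU)
    (hf.continuousOn.integrable_mul_of_tsupport_subset (hg.continuous_pd3 j) (hgs.pd3 j)
      ((tsupport_pd3_subset j).trans hgU))
    (hf.continuousOn.integrable_mul_of_tsupport_subset hg.continuous hgs hgU)
    (fun x hx => (hf.differentiableOn one_ne_zero x (hgU hx)).differentiableAt
      (hU.mem_nhds (hgU hx)))
    (fun x _ => hg.differentiable one_ne_zero x)

theorem integral_pd3_mul_pd3_comm (hU : IsOpen U) (hf : ContDiffOn ℝ 1 f U)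
    (hψ : ContDiff ℝ 2 ψ) (hψs : HasCompactSupport ψ) (hψU : tsupport ψ ⊆ U) (i k : Fin 3) :
    ∫ x, pd3 k f x * pd3 i ψ x = ∫ x, pd3 i f x * pd3 k ψ x := by
  have ibp : ∀ a b : Fin 3, ∫ x, f x * pd3 a (pd3 b ψ) x = -∫ x, pd3 a f x * pd3 b ψ x :=
    fun a b => integral_mul_pd3_eq_neg hU hf (hψ.contDiff_pd3 (by norm_num) b) (hψs.pd3 b)
      ((tsupport_pd3_subset b).trans hψU) a
  have schwarz : ∫ x, f x * pd3 k (pd3 i ψ) x = ∫ x, f x * pd3 i (pd3 k ψ) x := by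
    simp only [pd3_pd3_comm hψ k i]
  linear_combination ibp k i - ibp i k - schwarz

variable {F : ℝ³ → Fin 3 → ℂ}

theorem integrable_dotProduct_grad3 (hF : ∀ i, ContinuousOn (fun x => F x i) U)
    (hψ : ContDiff ℝ 1 ψ) (hψs : HasCompactSupport ψ) (hψU : tsupport ψ ⊆ U) :
    Integrable (fun x => F x ⬝ᵥ grad3 ψ x) :=
  integrable_finsetSum _ fun i _ => (hF i).integrable_mul_of_tsupport_subset
    (hψ.continuous_pd3 i) (hψs.pd3 i) ((tsupport_pd3_subset i).trans hψU)

theorem integral_dotProduct_grad3_congr {G : ℝ³ → Fin 3 → ℂ} (hFG : ∀ x ∈ U, F x = G x)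
    (hψU : tsupport ψ ⊆ U) : ∫ x, F x ⬝ᵥ grad3 ψ x = ∫ x, G x ⬝ᵥ grad3 ψ x := by
  refine integral_congr_ae (.of_forall fun x => ?_)
  by_cases hx : x ∈ U
  · simp only [hFG x hx]
  · simp [grad3_eq_zero_of_notMem_tsupport fun h => hx (hψU h)]

theorem integral_mul_vdiv (hU : IsOpen U) (hg : ContDiffOn ℝ 1 g U)
    (hF : ∀ i, ContDiff ℝ 1 (fun x => F x i)) (hFs : ∀ i, HasCompactSupport (fun x => F x i))
    (hFU : ∀ i, tsupport (fun x => F x i) ⊆ U) :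
    ∫ x, g x * vdiv F x = -∫ x, grad3 g x ⬝ᵥ F x := by
  simp only [vdiv, Finset.mul_sum, dotProduct, grad3]
  rw [integral_finsetSum _ fun i _ => hg.continuousOn.integrable_mul_of_tsupport_subset
      ((hF i).continuous_pd3 i) ((hFs i).pd3 i) ((tsupport_pd3_subset i).trans (hFU i)),
    integral_finsetSum _ fun i _ => (hg.continuousOn_pd3 hU i).integrable_mul_of_tsupport_subset
      (hF i).continuous (hFs i) (hFU i),
    ← Finset.sum_neg_distrib]
  exact Finset.sum_congr rfl fun i _ => integral_mul_pd3_eq_neg hU hg (hF i) (hFs i) (hFU i) i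

theorem integral_vdiv_mul (hU : IsOpen U) (hF : ∀ i, ContDiffOn ℝ 1 (fun x => F x i) U)
    (hg : ContDiff ℝ 1 g) (hgs : HasCompactSupport g) (hgU : tsupport g ⊆ U) :
    ∫ x, vdiv F x * g x = -∫ x, F x ⬝ᵥ grad3 g x := by
  simp only [vdiv, Finset.sum_mul, dotProduct, grad3]
  rw [integral_finsetSum _ fun i _ =>
      ((hF i).continuousOn_pd3 hU i).integrable_mul_of_tsupport_subset hg.continuous hgs hgU,
    integral_finsetSum _ fun i _ => (hF i).continuousOn.integrable_mul_of_tsupport_subset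
      (hg.continuous_pd3 i) (hgs.pd3 i) ((tsupport_pd3_subset i).trans hgU),
    ← Finset.sum_neg_distrib]
  refine Finset.sum_congr rfl fun i _ => ?_
  rw [integral_mul_pd3_eq_neg hU (hF i) hg hgs hgU i, neg_neg]

theorem integral_vpd3_dotProduct_grad3 (hU : IsOpen U) (hF : ∀ i, ContDiffOn ℝ 1 (fun x => F x i) U)
    (hψ : ContDiff ℝ 2 ψ) (hψs : HasCompactSupport ψ) (hψU : tsupport ψ ⊆ U) (k : Fin 3) :
    ∫ x, vpd3 k F x ⬝ᵥ grad3 ψ x = ∫ x, vdiv F x * pd3 k ψ x := by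
  have hψ1 : ContDiff ℝ 1 ψ := hψ.of_le (by norm_num)
  simp only [vpd3, vdiv, Finset.sum_mul, dotProduct, grad3]
  rw [integral_finsetSum _ fun i _ =>
      ((hF i).continuousOn_pd3 hU k).integrable_mul_of_tsupport_subset (hψ1.continuous_pd3 i)
        (hψs.pd3 i) ((tsupport_pd3_subset i).trans hψU),
    integral_finsetSum _ fun i _ =>
      ((hF i).continuousOn_pd3 hU i).integrable_mul_of_tsupport_subset (hψ1.continuous_pd3 k)
        (hψs.pd3 k) ((tsupport_pd3_subset k).trans hψU)]
  exact Finset.sum_congr rfl fun i _ => integral_pd3_mul_pd3_comm hU (hF i) hψ hψs hψU i k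

end IntegrationByParts

section DivCurl

variable {U : Set ℝ³} {E : ℝ³ → Fin 3 → ℂ}

theorem integral_vcurl_dotProduct_grad3_eq_zero (hU : IsOpen U)
    (hE : ∀ i, ContDiffOn ℝ 1 (fun x => E x i) U) {ψ : ℝ³ → ℂ} (hψ : ContDiff ℝ 2 ψ)
    (hψs : HasCompactSupport ψ) (hψU : tsupport ψ ⊆ U) :
    ∫ x, vcurl E x ⬝ᵥ grad3 ψ x = 0 := by
  set T : Fin 3 → Fin 3 → Fin 3 → ℝ³ → ℂ := fun a b c x => pd3 a (fun y => E y b) x * pd3 c ψ x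
  have hT : ∀ a b c, Integrable (T a b c) := fun a b c =>
    ((hE b).continuousOn_pd3 hU a).integrable_mul_of_tsupport_subset
      ((hψ.of_le (by norm_num)).continuous_pd3 c) (hψs.pd3 c) ((tsupport_pd3_subset c).trans hψU)
  have swap : ∀ a b c, ∫ x, T a b c x = ∫ x, T c b a x := fun a b c =>
    integral_pd3_mul_pd3_comm hU (hE b) hψ hψs hψU c a
  have expand : (fun x => vcurl E x ⬝ᵥ grad3 ψ x) =
      (T 1 2 0 - T 2 1 0) + (T 2 0 1 - T 0 2 1) + (T 0 1 2 - T 1 0 2) := by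
    funext x
    simp [T, vcurl, dotProduct, grad3, Fin.sum_univ_three]
    ring
  rw [expand, integral_add' (((hT 1 2 0).sub (hT 2 1 0)).add ((hT 2 0 1).sub (hT 0 2 1)))
      ((hT 0 1 2).sub (hT 1 0 2)), integral_add' ((hT 1 2 0).sub (hT 2 1 0))
      ((hT 2 0 1).sub (hT 0 2 1)), integral_sub' (hT 1 2 0) (hT 2 1 0),
    integral_sub' (hT 2 0 1) (hT 0 2 1), integral_sub' (hT 0 1 2) (hT 1 0 2),
    swap 1 2 0, swap 2 0 1, swap 0 1 2]
  ring

theorem ae_vdiv_eq_zero_of_vcurl_eq (hU : IsOpen U) (hE : ∀ i, ContDiffOn ℝ 1 (fun x => E x i) U)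
    {G : ℝ³ → Fin 3 → ℂ} (hG : ∀ i, ContDiffOn ℝ 1 (fun x => G x i) U)
    (hEG : ∀ x ∈ U, vcurl E x = G x) : ∀ᵐ x, x ∈ U → vdiv G x = 0 := by
  refine hU.ae_eq_zero_of_integral_contDiff_smul_eq_zero
    ((continuousOn_vdiv hU hG).locallyIntegrableOn hU.measurableSet) fun g hg hgs hgU => ?_
  set gc : ℝ³ → ℂ := fun x => (g x : ℂ)
  have hgc : ContDiff ℝ 2 gc := Complex.ofRealCLM.contDiff.comp (hg.of_le (by norm_cast))
  have hgcs : HasCompactSupport gc := hgs.comp_left Complex.ofReal_zero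
  have hgcU : tsupport gc ⊆ U := (tsupport_comp_subset Complex.ofReal_zero g).trans hgU
  calc ∫ x, g x • vdiv G x = ∫ x, vdiv G x * gc x := by
        simp only [gc, Complex.real_smul, mul_comm]
    _ = -∫ x, G x ⬝ᵥ grad3 gc x := integral_vdiv_mul hU hG (hgc.of_le (by norm_num)) hgcs hgcU
    _ = -∫ x, vcurl E x ⬝ᵥ grad3 gc x := by
        rw [integral_dotProduct_grad3_congr (fun x hx => (hEG x hx).symm) hgcU]
    _ = 0 := by rw [integral_vcurl_dotProduct_grad3_eq_zero hU hE hgc hgcs hgcU, neg_zero]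

end DivCurl

section Maxwell

variable {U : Set ℝ³} {μ : ℝ³ → Matrix (Fin 3) (Fin 3) ℂ} {H : ℝ³ → Fin 3 → ℂ} {ψ : ℝ³ → ℂ}

theorem integral_mul_vdiv_transpose_mulVec_grad3 (hU : IsOpen U)
    (hμ : ∀ i j, ContDiffOn ℝ 1 (fun x => μ x i j) U) (hH : ∀ i, ContDiffOn ℝ 1 (fun x => H x i) U)
    (hψ : ContDiff ℝ 2 ψ) (hψs : HasCompactSupport ψ) (hψU : tsupport ψ ⊆ U) (k : Fin 3) :
    ∫ x, H x k * vdiv (fun y => (μ y)ᵀ *ᵥ grad3 ψ y) x =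
      ∫ x, (mpd3 k μ x *ᵥ H x - μ x *ᵥ cross3 (e3 k) (vcurl H x)
        - vdiv (fun y => μ y *ᵥ H y) x • e3 k) ⬝ᵥ grad3 ψ x := by
  have hψ1 : ContDiff ℝ 1 ψ := hψ.of_le (by norm_num)
  have hμH := contDiffOn_mulVec_apply hμ hH
  set F : ℝ³ → Fin 3 → ℂ := fun y => (μ y)ᵀ *ᵥ grad3 ψ y
  have hFU : ∀ i, tsupport (fun x => F x i) ⊆ U :=
    fun i => (tsupport_mulVec_grad3_subset _ ψ i).trans hψU
  have hF : ∀ i, ContDiff ℝ 1 (fun x => F x i) := fun i =>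
    (contDiffOn_mulVec_apply (fun i j => hμ j i)
      (fun j => (hψ.contDiff_pd3 (by norm_num) j).contDiffOn) i).contDiff_of_tsupport_subset
      hU (hFU i)
  have hFs : ∀ i, HasCompactSupport (fun x => F x i) := fun i =>
    hψs.of_isClosed_subset (isClosed_tsupport _) (tsupport_mulVec_grad3_subset _ ψ i)
  have hcurl : ∀ j, ContinuousOn (fun x => cross3 (e3 k) (vcurl H x) j) U := fun j =>
    (((hH k).continuousOn_pd3 hU j).sub ((hH j).continuousOn_pd3 hU k)).congr
      fun x _ => cross3_e3_vcurl_apply H k j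
  have ha := integrable_dotProduct_grad3 (F := fun x => mpd3 k μ x *ᵥ H x)
    (continuousOn_mulVec_apply (fun i j => (hμ i j).continuousOn_pd3 hU k)
      fun j => (hH j).continuousOn) hψ1 hψs hψU
  have hb := integrable_dotProduct_grad3 (continuousOn_mulVec_apply
    (fun i j => (hμ i j).continuousOn) hcurl) hψ1 hψs hψU
  have hc := integrable_dotProduct_grad3 (F := vpd3 k fun y => μ y *ᵥ H y)
    (fun i => (hμH i).continuousOn_pd3 hU k) hψ1 hψs hψU
  have hpointwise : ∀ x, grad3 (fun y => H y k) x ⬝ᵥ F x =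
      (μ x *ᵥ cross3 (e3 k) (vcurl H x)) ⬝ᵥ grad3 ψ x
        + vpd3 k (fun y => μ y *ᵥ H y) x ⬝ᵥ grad3 ψ x - (mpd3 k μ x *ᵥ H x) ⬝ᵥ grad3 ψ x := by
    intro x
    by_cases hx : x ∈ U
    · have hd : ∀ {f : ℝ³ → ℂ}, ContDiffOn ℝ 1 f U → DifferentiableAt ℝ f x := fun hf =>
        (hf.differentiableOn one_ne_zero x hx).differentiableAt (hU.mem_nhds hx)
      rw [dotProduct_mulVec, vecMul_transpose, grad3_apply_eq_cross3_vcurl_add_vpd3,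
        vpd3_mulVec (fun i j => hd (hμ i j)) (fun j => hd (hH j)), mulVec_add, add_dotProduct,
        add_dotProduct]
      ring
    · simp [F, grad3_eq_zero_of_notMem_tsupport fun h => hx (hψU h)]
  rw [integral_mul_vdiv hU (hH k) hF hFs hFU, integral_congr_ae (.of_forall hpointwise),
    integral_sub (f := fun x => _ + _) (hb.add hc) ha, integral_add hb hc,
    integral_vpd3_dotProduct_grad3 hU hμH hψ hψs hψU k]
  have hd : Integrable (fun x => vdiv (fun y => μ y *ᵥ H y) x * grad3 ψ x k) :=
    (continuousOn_vdiv hU hμH).integrable_mul_of_tsupport_subset (hψ1.continuous_pd3 k)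
      (hψs.pd3 k) ((tsupport_pd3_subset k).trans hψU)
  simp only [sub_dotProduct, smul_e3_dotProduct]
  rw [integral_sub (f := fun x => _ - _) (ha.sub hb) hd, integral_sub ha hb]
  simp only [grad3]
  ring

theorem ae_vdiv_mulVec_eq_of_vcurl_eq (hU : IsOpen U) {ω : ℂ} (hω : ω ≠ 0)
    {E Jm : ℝ³ → Fin 3 → ℂ} (hμ : ∀ i j, ContDiffOn ℝ 1 (fun x => μ x i j) U)
    (hH : ∀ i, ContDiffOn ℝ 1 (fun x => H x i) U) (hE : ∀ i, ContDiffOn ℝ 1 (fun x => E x i) U)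
    (hJm : ∀ i, ContDiffOn ℝ 1 (fun x => Jm x i) U)
    (hM : ∀ x ∈ U, vcurl E x = -((Complex.I * ω) • (μ x *ᵥ H x)) + Jm x) :
    ∀ᵐ x, x ∈ U → vdiv (fun y => μ y *ᵥ H y) x = -(Complex.I / ω) * vdiv Jm x := by
  have hμH := contDiffOn_mulVec_apply hμ hH
  have hG : ∀ i, ContDiffOn ℝ 1 (fun x => (-(Complex.I * ω) • (μ x *ᵥ H x) + Jm x) i) U :=
    fun i => (contDiffOn_const.mul (hμH i)).add (hJm i)
  filter_upwards [ae_vdiv_eq_zero_of_vcurl_eq hU hE hG fun x hx => by rw [hM x hx, neg_smul]]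
    with x hx hxU
  have hd : ∀ {f : ℝ³ → ℂ}, ContDiffOn ℝ 1 f U → DifferentiableAt ℝ f x := fun hf =>
    (hf.differentiableOn one_ne_zero x hxU).differentiableAt (hU.mem_nhds hxU)
  have hdiv := hx hxU
  rw [vdiv_smul_add (fun i => hd (hμH i)) (fun i => hd (hJm i))] at hdiv
  rw [show vdiv Jm x = Complex.I * ω * vdiv (fun y => μ y *ᵥ H y) x by
    linear_combination hdiv]
  field_simp
  simp [Complex.I_sq]

end Maxwell

theorem stmt_3_general
    (Ω : Set (Fin 3 → ℝ)) (hΩ : IsOpen Ω) (ω : ℂ) (hω : ω ≠ 0)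
    (ε μ : (Fin 3 → ℝ) → Matrix (Fin 3) (Fin 3) ℂ)
    (E H Je Jm : (Fin 3 → ℝ) → Fin 3 → ℂ)
    (hμ : ∀ i j, ContDiffOn ℝ 1 (fun x => μ x i j) Ω)
    (hE : ContDiffOn ℝ 1 E Ω) (hH : ContDiffOn ℝ 1 H Ω)
    (hJm : ContDiffOn ℝ 1 Jm Ω)
    (hM1 : ∀ x ∈ Ω, vcurl H x = (Complex.I * ω) • (ε x *ᵥ E x) + Je x)
    (hM2 : ∀ x ∈ Ω, vcurl E x = -((Complex.I * ω) • (μ x *ᵥ H x)) + Jm x) :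
    ∀ k : Fin 3, ∀ φ : (Fin 3 → ℝ) → ℂ,
      ContDiff ℝ 2 φ → HasCompactSupport φ → tsupport φ ⊆ Ω →
      ∫ x in Ω, H x k *
          vdiv (fun y => (μ y)ᵀ *ᵥ grad3 (fun z => (starRingEnd ℂ) (φ z)) y) x
        = ∫ x in Ω,
            (mpd3 k μ x *ᵥ H x
              - μ x *ᵥ cross3 (e3 k) (Je x + (Complex.I * ω) • (ε x *ᵥ E x))
              + ((Complex.I / ω) * vdiv Jm x) • e3 k)
            ⬝ᵥ grad3 (fun z => (starRingEnd ℂ) (φ z)) x := by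
  intro k φ hφ hφs hφΩ
  set ψ : ℝ³ → ℂ := fun z => (starRingEnd ℂ) (φ z)
  have hψ : ContDiff ℝ 2 ψ := Complex.conjCLE.contDiff.comp hφ
  have hψs : HasCompactSupport ψ := hφs.comp_left (map_zero _)
  have hψΩ : tsupport ψ ⊆ Ω := (tsupport_comp_subset (map_zero _) φ).trans hφΩ
  have hnot : ∀ x ∉ Ω, x ∉ tsupport ψ := fun x hx h => hx (hψΩ h)
  rw [setIntegral_eq_integral_of_forall_compl_eq_zero fun x hx =>
      by rw [vdiv_mulVec_grad3_eq_zero_of_notMem_tsupport _ (hnot x hx), mul_zero],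
    setIntegral_eq_integral_of_forall_compl_eq_zero fun x hx =>
      by rw [grad3_eq_zero_of_notMem_tsupport (hnot x hx), dotProduct_zero],
    integral_mul_vdiv_transpose_mulVec_grad3 hΩ hμ (contDiffOn_pi.1 hH) hψ hψs hψΩ k]
  refine integral_congr_ae ?_
  filter_upwards [ae_vdiv_mulVec_eq_of_vcurl_eq hΩ hω hμ (contDiffOn_pi.1 hH)
    (contDiffOn_pi.1 hE) (contDiffOn_pi.1 hJm) hM2] with x hdiv
  by_cases hx : x ∈ Ω
  · rw [hdiv hx, hM1 x hx, add_comm (Je x), neg_mul, neg_smul, sub_neg_eq_add]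
  · simp only [grad3_eq_zero_of_notMem_tsupport (hnot x hx), dotProduct_zero]

/-- Interior very weak identity (2.4) for the components of the magnetic field, tested against
compactly supported C² test functions. -/
theorem stmt_3
    (Ω : Set (Fin 3 → ℝ)) (hΩ : IsOpen Ω) (ω : ℂ) (hω : ω ≠ 0)
    (ε μ : (Fin 3 → ℝ) → Matrix (Fin 3) (Fin 3) ℂ)
    (E H Je Jm : (Fin 3 → ℝ) → Fin 3 → ℂ)
    (hε : ∀ i j, ContDiffOn ℝ 1 (fun x => ε x i j) Ω)
    (hμ : ∀ i j, ContDiffOn ℝ 1 (fun x => μ x i j) Ω)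
    (hE : ContDiffOn ℝ 1 E Ω) (hH : ContDiffOn ℝ 1 H Ω)
    (hJm : ContDiffOn ℝ 1 Jm Ω) (hJe : ContinuousOn Je Ω)
    (hM1 : ∀ x ∈ Ω, vcurl H x = (Complex.I * ω) • (ε x *ᵥ E x) + Je x)
    (hM2 : ∀ x ∈ Ω, vcurl E x = -((Complex.I * ω) • (μ x *ᵥ H x)) + Jm x) :
    ∀ k : Fin 3, ∀ φ : (Fin 3 → ℝ) → ℂ,
      ContDiff ℝ 2 φ → HasCompactSupport φ → tsupport φ ⊆ Ω →
      ∫ x in Ω, H x k *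
          vdiv (fun y => (μ y)ᵀ *ᵥ grad3 (fun z => (starRingEnd ℂ) (φ z)) y) x
        = ∫ x in Ω,
            (mpd3 k μ x *ᵥ H x
              - μ x *ᵥ cross3 (e3 k) (Je x + (Complex.I * ω) • (ε x *ᵥ E x))
              + ((Complex.I / ω) * vdiv Jm x) • e3 k)
            ⬝ᵥ grad3 (fun z => (starRingEnd ℂ) (φ z)) x :=
  stmt_3_general Ω hΩ ω hω ε μ E H Je Jm hμ hE hH hJm hM1 hM2
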